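/- arXiv:2412.13671 — 2 statements merged into one kernel-verified Lean document; each statement's English description precedes it below -/
import Mathlib

section
/- Let G = G1 *_H G2 be an amalgamated free product of groups G1 and G2 over a proper subgroup H such that the index of H in G1 is at most 2 and the index of H in G2 is at most 2. Then for every m ≥ 0 the m-almost palindromic width of G with respect to the generating set G1 ∪ G2 is finite; that is, there exists a natural number N such that every element of G is a product of at most N m-almost palindromes. -/
/-- `a` is a letter of the alphabet `X^{±1}`. -/
def IsLetter {G : Type*} [Group G] (X : Set G) (a : G) : Prop := a ∈ X ∨ a⁻¹ ∈ X

/-- A word in the alphabet `X^{±1}`, as a list of group elements. -/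
def IsWord {G : Type*} [Group G] (X : Set G) (w : List G) : Prop := ∀ a ∈ w, IsLetter X a

/-- The word `w` differs from the word `p` in at most `m` letter positions. -/
def DiffersByAtMost {G : Type*} (m : ℕ) (w p : List G) : Prop :=
  w.length = p.length ∧ {i : ℕ | w[i]? ≠ p[i]?}.ncard ≤ m

/-- `g` is an `m`-almost palindrome with respect to the generating set `X` : some word
in the letters `X^{±1}` representing `g` differs from a palindrome word (in the same
alphabet) in at most `m` letter positions. -/
def IsAlmostPalindrome {G : Type*} [Group G] (X : Set G) (m : ℕ) (g : G) : Prop :=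
  ∃ w : List G, IsWord X w ∧ w.prod = g ∧
    ∃ p : List G, IsWord X p ∧ p.reverse = p ∧ DiffersByAtMost m w p

/-- `g` is a product of at most `k` many `m`-almost palindromes w.r.t. `X`. -/
def IsProductOfAlmostPalindromes {G : Type*} [Group G] (X : Set G) (m k : ℕ) (g : G) : Prop :=
  ∃ l : List G, l.length ≤ k ∧ (∀ x ∈ l, IsAlmostPalindrome X m x) ∧ l.prod = g

open Monoid

/-
A subgroup of index at most two is normal, and conjugation by either factor then preserves the
image `N` of `H` in `G = G₁ *_H G₂`, so `N` is normal in `G`. With `a`, `b` representatives of the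
non-trivial cosets of `H` in `G₁`, `G₂` (or `1`), `G / N` is generated by the images of `a` and
`b`, which have order at most two; hence `G / N` is a quotient of the infinite dihedral group and
every `g ∈ G` is `(ab)ᵏ h` or `(ab)ᵏ a h` with `k ∈ ℤ`, `h ∈ N`. Now `(ab)ᵏ a` is spelled by a
palindromic word in `a^{±1}, b^{±1}`, `(ab)ᵏ = ((ab)ᵏ⁻¹ a) b` is a product of two palindromes, and
`h` is a single letter; so three palindromes (already `0`-almost palindromes) suffice.
-/

open Subgroup

section Palindromes

variable {G : Type*} [Group G] {X : Set G} {m : ℕ} {x y : G}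

theorem IsLetter.inv (h : IsLetter X x) : IsLetter X x⁻¹ := by
  unfold IsLetter at *
  rwa [inv_inv, or_comm]

theorem isAlmostPalindrome_prod_of_reverse_eq {w : List G} (hw : IsWord X w)
    (hrev : w.reverse = w) : IsAlmostPalindrome X m w.prod :=
  ⟨w, hw, rfl, w, hw, hrev, rfl, by simp⟩

theorem isAlmostPalindrome_of_isLetter (h : IsLetter X x) : IsAlmostPalindrome X m x := by
  simpa using isAlmostPalindrome_prod_of_reverse_eq (m := m) (w := [x]) (by simpa [IsWord]) rfl

/-- `(xy)ⁿ⁺¹x = x · (yx)ⁿy · x`, so the palindromes for `(xy)ⁿx` and `(yx)ⁿy` are built together. -/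
theorem exists_palindrome_prod_eq_pow_mul (hx : IsLetter X x) (hy : IsLetter X y) (n : ℕ) :
    ∃ w : List G, IsWord X w ∧ w.reverse = w ∧ w.prod = (x * y) ^ n * x := by
  induction n generalizing x y with
  | zero => exact ⟨[x], by simpa [IsWord], rfl, by simp⟩
  | succ n ih =>
    obtain ⟨w, hw, hrev, hprod⟩ := ih hy hx
    refine ⟨x :: (w ++ [x]), ?_, by simp [hrev], ?_⟩
    · intro z hz
      simp only [List.mem_cons, List.mem_append, List.not_mem_nil, or_false] at hz
      rcases hz with rfl | hz | rfl
      exacts [hx, hw z hz, hx]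
    · rw [List.prod_cons, List.prod_append, hprod, List.prod_singleton, ← mul_assoc, ← mul_assoc,
        ← mul_pow_mul, pow_succ, mul_assoc _ x y]

theorem isAlmostPalindrome_zpow_mul (hx : IsLetter X x) (hy : IsLetter X y) (k : ℤ) :
    IsAlmostPalindrome X m ((x * y) ^ k * x) := by
  cases k with
  | ofNat n =>
    obtain ⟨w, hw, hrev, hprod⟩ := exists_palindrome_prod_eq_pow_mul hx hy n
    simpa [hprod] using isAlmostPalindrome_prod_of_reverse_eq (m := m) hw hrev
  | negSucc n =>
    obtain ⟨w, hw, hrev, hprod⟩ := exists_palindrome_prod_eq_pow_mul hy.inv hx.inv n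
    have : (x * y) ^ Int.negSucc n * x = (y⁻¹ * x⁻¹) ^ n * y⁻¹ := by
      rw [zpow_negSucc, ← inv_pow, mul_inv_rev, pow_succ, ← mul_assoc, inv_mul_cancel_right]
    rw [this, ← hprod]
    exact isAlmostPalindrome_prod_of_reverse_eq hw hrev

theorem IsAlmostPalindrome.isProductOfAlmostPalindromes (h : IsAlmostPalindrome X m x) :
    IsProductOfAlmostPalindromes X m 1 x :=
  ⟨[x], by simp, by simpa using h, by simp⟩

theorem IsProductOfAlmostPalindromes.mul {k l : ℕ} (hx : IsProductOfAlmostPalindromes X m k x)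
    (hy : IsProductOfAlmostPalindromes X m l y) :
    IsProductOfAlmostPalindromes X m (k + l) (x * y) := by
  obtain ⟨u, hu, hux, rfl⟩ := hx
  obtain ⟨v, hv, hvy, rfl⟩ := hy
  refine ⟨u ++ v, by simp; omega, ?_, List.prod_append⟩
  intro z hz
  rcases List.mem_append.mp hz with hz | hz
  exacts [hux z hz, hvy z hz]

theorem IsProductOfAlmostPalindromes.mono {k l : ℕ} (h : IsProductOfAlmostPalindromes X m k x)
    (hkl : k ≤ l) : IsProductOfAlmostPalindromes X m l x :=
  let ⟨w, hw, hwx, hprod⟩ := h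
  ⟨w, hw.trans hkl, hwx, hprod⟩

theorem isProductOfAlmostPalindromes_two_zpow (hx : IsLetter X x) (hy : IsLetter X y) (k : ℤ) :
    IsProductOfAlmostPalindromes X m 2 ((x * y) ^ k) := by
  have : (x * y) ^ k = (x * y) ^ (k - 1) * x * y := by
    rw [mul_assoc, zpow_sub_one, inv_mul_cancel_right]
  rw [this]
  exact (isAlmostPalindrome_zpow_mul hx hy _).isProductOfAlmostPalindromes.mul
    (isAlmostPalindrome_of_isLetter hy).isProductOfAlmostPalindromes

end Palindromes

theorem exists_zpow_of_mem_closure_pair {Q : Type*} [Group Q] {s t q : Q} (hs : s * s = 1)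
    (ht : t * t = 1) (hq : q ∈ closure {s, t}) :
    ∃ k : ℤ, q = (s * t) ^ k ∨ q = (s * t) ^ k * s := by
  have step : ∀ x y, y ∈ ({s, t} : Set Q) → (∃ k : ℤ, x = (s * t) ^ k ∨ x = (s * t) ^ k * s) →
      ∃ k : ℤ, x * y = (s * t) ^ k ∨ x * y = (s * t) ^ k * s := by
    rintro x y (rfl | rfl) ⟨k, rfl | rfl⟩
    · exact ⟨k, Or.inr rfl⟩
    · exact ⟨k, Or.inl (by rw [mul_assoc, hs, mul_one])⟩
    · refine ⟨k - 1, Or.inr ?_⟩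
      rw [zpow_sub_one, mul_assoc, mul_inv_rev, inv_mul_cancel_right,
        inv_eq_of_mul_eq_one_right ht]
    · exact ⟨k + 1, Or.inl (by rw [zpow_add_one, mul_assoc])⟩
  induction hq using closure_induction_right with
  | one => exact ⟨0, Or.inl (zpow_zero _).symm⟩
  | mul_right x _ y hy ih => exact step x y hy ih
  | mul_inv_cancel x _ y hy ih =>
    have hinv : y⁻¹ = y := by rcases hy with rfl | rfl <;> exact inv_eq_of_mul_eq_one_right ‹_›
    rw [hinv]
    exact step x y hy ih

theorem exists_zpow_inv_mul_mem {G : Type*} [Group G] {N : Subgroup G} [N.Normal] {a b : G}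
    (ha : a * a ∈ N) (hb : b * b ∈ N) (hgen : closure {a, b} ⊔ N = ⊤) (g : G) :
    ∃ k : ℤ, ((a * b) ^ k)⁻¹ * g ∈ N ∨ ((a * b) ^ k * a)⁻¹ * g ∈ N := by
  obtain ⟨x, hx, n, hn, rfl⟩ :=
    mem_sup_of_normal_right.mp (hgen.symm ▸ mem_top g : g ∈ closure {a, b} ⊔ N)
  have hmk : (x : G ⧸ N) ∈ closure {(a : G ⧸ N), (b : G ⧸ N)} := by
    have := mem_map_of_mem (QuotientGroup.mk' N) hx
    rwa [MonoidHom.map_closure, Set.image_pair] at this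
  have hsq : ∀ z : G, z * z ∈ N → (z : G ⧸ N) * z = 1 := fun z hz =>
    (QuotientGroup.eq_one_iff _).mpr hz
  have hrep : ∀ w : G, (w : G ⧸ N) = x → w⁻¹ * (x * n) ∈ N := fun w hw =>
    mul_assoc w⁻¹ x n ▸ mul_mem (QuotientGroup.eq.mp hw) hn
  obtain ⟨k, hk | hk⟩ := exists_zpow_of_mem_closure_pair (hsq a ha) (hsq b hb) hmk
  exacts [⟨k, Or.inl (hrep _ (by simp [hk]))⟩, ⟨k, Or.inr (hrep _ (by simp [hk]))⟩]

namespace Subgroup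

variable {K : Type*} [Group K] {L : Subgroup K}

theorem normal_of_index_le_two (h2 : L.index ≤ 2) (h0 : L.index ≠ 0) : L.Normal := by
  obtain h | h : L.index = 1 ∨ L.index = 2 := by omega
  exacts [normal_of_index_eq_one h, normal_of_index_eq_two h]

theorem exists_forall_mem_or_inv_mul_mem_of_index_le_two (h2 : L.index ≤ 2) (h0 : L.index ≠ 0) :
    ∃ c : K, ∀ k, k ∈ L ∨ c⁻¹ * k ∈ L := by
  obtain h | h : L.index = 1 ∨ L.index = 2 := by omega
  · exact ⟨1, fun k => Or.inl (index_eq_one.mp h ▸ mem_top k)⟩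
  · obtain ⟨c, hc⟩ : ∃ c, c ∉ L := by
      by_contra! hall
      exact absurd (index_eq_one.mpr (eq_top_iff.mpr fun k _ => hall k)) (by omega)
    refine ⟨c, fun k => or_iff_not_imp_left.mpr fun hk => ?_⟩
    rw [mul_mem_iff_of_index_two h, inv_mem_iff]
    tauto

theorem mul_self_mem_of_forall_mem_or_inv_mul_mem {c : K} (hc : ∀ k, k ∈ L ∨ c⁻¹ * k ∈ L) :
    c * c ∈ L := by
  rcases hc (c * c) with h | h
  · exact h
  · rw [inv_mul_cancel_left] at h
    exact mul_mem h h

end Subgroup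

namespace Monoid.PushoutI

variable {ι H : Type*} {K : ι → Type*} [Group H] [∀ i, Group (K i)] {φ : ∀ i, H →* K i}

theorem of_mem_base_range {i : ι} {k : K i} (hk : k ∈ (φ i).range) :
    of i k ∈ (base φ).range := by
  obtain ⟨h, rfl⟩ := hk
  exact ⟨h, (of_apply_eq_base φ i h).symm⟩

theorem base_range_normal (hφ : ∀ i, ((φ i).range).Normal) : (base φ).range.Normal where
  conj_mem n hn g := by
    induction g using PushoutI.induction_on generalizing n with
    | of i k =>
      obtain ⟨h, rfl⟩ := hn
      rw [← of_apply_eq_base φ i h, ← map_inv, ← map_mul, ← map_mul]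
      exact of_mem_base_range ((hφ i).conj_mem _ ⟨h, rfl⟩ k)
    | base h => exact mul_mem (mul_mem ⟨h, rfl⟩ hn) (inv_mem ⟨h, rfl⟩)
    | mul x y ihx ihy =>
      simpa only [mul_inv_rev, mul_assoc] using ihx _ (ihy n hn)

theorem closure_sup_base_range_eq_top {c : ∀ i, K i}
    (hc : ∀ i k, k ∈ (φ i).range ∨ (c i)⁻¹ * k ∈ (φ i).range) :
    closure (Set.range fun i => of i (c i)) ⊔ (base φ).range = ⊤ := by
  refine eq_top_iff' _ |>.mpr fun g => ?_
  induction g using PushoutI.induction_on with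
  | of i k =>
    rcases hc i k with hk | hk
    · exact mem_sup_right (of_mem_base_range hk)
    · rw [← mul_inv_cancel_left (c i) k, map_mul]
      exact mul_mem (mem_sup_left (subset_closure ⟨i, rfl⟩)) (mem_sup_right (of_mem_base_range hk))
  | base h => exact mem_sup_right ⟨h, rfl⟩
  | mul x y hx hy => exact mul_mem hx hy

end Monoid.PushoutI

theorem amalgamated_almost_palindromic_width_finite_general
    {H : Type*} [Group H] {K : Bool → Type*} [∀ i, Group (K i)]
    (φ : ∀ i, H →* K i)
    (hidx : ∀ i, ((φ i).range).index ≤ 2 ∧ ((φ i).range).index ≠ 0)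
    (X : Set (PushoutI φ))
    (hX : X = Set.range (PushoutI.of (φ := φ) true) ∪ Set.range (PushoutI.of (φ := φ) false))
    (m : ℕ) :
    ∃ N : ℕ, ∀ g : PushoutI φ, IsProductOfAlmostPalindromes X m N g := by
  have := PushoutI.base_range_normal fun i => normal_of_index_le_two (hidx i).1 (hidx i).2
  choose c hc using fun i => exists_forall_mem_or_inv_mul_mem_of_index_le_two (hidx i).1 (hidx i).2
  have hsq : ∀ i, PushoutI.of i (c i) * PushoutI.of i (c i) ∈ (PushoutI.base φ).range := by
    intro i
    rw [← map_mul]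
    exact PushoutI.of_mem_base_range (mul_self_mem_of_forall_mem_or_inv_mul_mem (hc i))
  have hgen := PushoutI.closure_sup_base_range_eq_top hc
  rw [Bool.range_eq] at hgen
  have hletter : ∀ i (k : K i), IsLetter X (PushoutI.of i k) := by
    subst hX
    rintro (_ | _) k
    exacts [Or.inl (Or.inr ⟨k, rfl⟩), Or.inl (Or.inl ⟨k, rfl⟩)]
  have hbase : ∀ n ∈ (PushoutI.base φ).range, IsLetter X n := by
    rintro _ ⟨h, rfl⟩
    simpa only [PushoutI.of_apply_eq_base] using hletter true (φ true h)
  refine ⟨3, fun g => ?_⟩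
  obtain ⟨w, hw, hwg⟩ : ∃ w, IsProductOfAlmostPalindromes X m 2 w ∧
      w⁻¹ * g ∈ (PushoutI.base φ).range := by
    obtain ⟨k, hk | hk⟩ := exists_zpow_inv_mul_mem (hsq false) (hsq true) hgen g
    · exact ⟨_, isProductOfAlmostPalindromes_two_zpow (hletter _ _) (hletter _ _) k, hk⟩
    · exact ⟨_, (isAlmostPalindrome_zpow_mul (hletter _ _) (hletter _ _) k
        ).isProductOfAlmostPalindromes.mono one_le_two, hk⟩
  simpa using hw.mul (isAlmostPalindrome_of_isLetter (hbase _ hwg)).isProductOfAlmostPalindromes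

/-- **Corollary.** Let `G = G₁ *_H G₂` be an amalgamated free product over a proper
subgroup `H` (the factors are `K true` and `K false`, with `H` embedded via the injective
maps `φ i`) such that `H` has finite index at most `2` in each factor. Then the
`m`-almost palindromic width of `G` with respect to `G₁ ∪ G₂` is finite for every `m`. -/
theorem amalgamated_almost_palindromic_width_finite
    {H : Type*} [Group H] {K : Bool → Type*} [∀ i, Group (K i)]
    (φ : ∀ i, H →* K i) (hinj : ∀ i, Function.Injective (φ i))
    (hprop : ∀ i, (φ i).range ≠ ⊤)
    (hidx : ∀ i, ((φ i).range).index ≤ 2 ∧ ((φ i).range).index ≠ 0)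
    (X : Set (PushoutI φ))
    (hX : X = Set.range (PushoutI.of (φ := φ) true) ∪ Set.range (PushoutI.of (φ := φ) false))
    (m : ℕ) :
    ∃ N : ℕ, ∀ g : PushoutI φ, IsProductOfAlmostPalindromes X m N g :=
  amalgamated_almost_palindromic_width_finite_general φ hidx X hX m
end

section
/- Let F be the free group on two generators a and b. Then for every m ≥ 0, the m-almost palindromic width of F with respect to the generating set {a, b} is infinite; equivalently, there is no pair of natural numbers (c, m) such that every element of F can be written as a product of at most c m-almost palindromes in the letters {a^{±1}, b^{±1}}. -/
/-
On reduced words over `{a, b}` let `Φ = (#aab - #b⁻¹a⁻¹a⁻¹) - (#baa - #a⁻¹a⁻¹b⁻¹)`, where `#u`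
counts the occurrences of `u` as a subword. Each bracket is a Brooks counting quasimorphism, and
reversing a word swaps the two brackets, so `Φ` is a quasimorphism that changes sign under
reversal; hence it vanishes on palindromes, and also on single letters. Changing one letter of a
word then moves `Φ` by at most four times the defect, so `|Φ|` is `O(m)` on `m`-almost
palindromes and `O(mk + k)` on products of `k` of them, while `Φ ((aabab⁻¹)ⁿ) = n`.
-/

namespace List

variable {α : Type*}

theorem finite_setOf_getElem?_ne (w p : List α) : {i : ℕ | w[i]? ≠ p[i]?}.Finite :=
  (Set.finite_Iio (max w.length p.length)).subset fun i hi => by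
    by_contra hlt
    simp only [Set.mem_Iio, not_lt, max_le_iff] at hlt
    exact hi (by rw [getElem?_eq_none hlt.1, getElem?_eq_none hlt.2])

theorem ncard_setOf_getElem?_ne_cons [DecidableEq α] (x y : α) (w p : List α) :
    {i : ℕ | (x :: w)[i]? ≠ (y :: p)[i]?}.ncard =
      {i : ℕ | w[i]? ≠ p[i]?}.ncard + if x = y then 0 else 1 := by
  have hsucc : Nat.succ '' {i : ℕ | w[i]? ≠ p[i]?} =
      {i : ℕ | (x :: w)[i]? ≠ (y :: p)[i]?} \ {0} := by
    ext (_ | i) <;> simp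
  have h0 : 0 ∈ {i : ℕ | (x :: w)[i]? ≠ (y :: p)[i]?} ↔ x ≠ y := by simp
  rw [← Set.ncard_image_of_injective {i : ℕ | w[i]? ≠ p[i]?} Nat.succ_injective, hsucc]
  split_ifs with hxy
  · rw [Set.sdiff_singleton_eq_self (by simp [hxy]), add_zero]
  · rw [Set.ncard_sdiff_singleton_add_one (h0.2 hxy) (finite_setOf_getElem?_ne _ _)]

variable [DecidableEq α]

def countInfix (p : List α) : List α → ℕ
  | [] => 0
  | a :: l => (if p <+: a :: l then 1 else 0) + countInfix p l

@[simp]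
theorem countInfix_nil (p : List α) : countInfix p [] = 0 := rfl

theorem countInfix_cons (p : List α) (a : α) (l : List α) :
    countInfix p (a :: l) = (if p <+: a :: l then 1 else 0) + countInfix p l := rfl

theorem countInfix_eq_zero_of_length_lt {p l : List α} (h : l.length < p.length) :
    countInfix p l = 0 := by
  induction l with
  | nil => rfl
  | cons a l ih =>
    have hp : ¬ p <+: a :: l := fun hp => by simpa using (hp.length_le.trans_lt h)
    rw [countInfix_cons, if_neg hp, ih (by simp at h; omega)]

theorem countInfix_add_countInfix_le_append (p A B : List α) :
    countInfix p A + countInfix p B ≤ countInfix p (A ++ B) := by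
  induction A with
  | nil => simp
  | cons a A ih =>
    have : (if p <+: a :: A then 1 else 0) ≤ if p <+: a :: (A ++ B) then 1 else 0 := by
      split_ifs with h h' <;> first | omega | exact absurd (h.trans (prefix_append _ B)) h'
    rw [cons_append, countInfix_cons, countInfix_cons]
    omega

theorem countInfix_append_le_min (p A B : List α) :
    countInfix p (A ++ B) ≤ countInfix p A + countInfix p B + min A.length (p.length - 1) := by
  induction A with
  | nil => simp
  | cons a A ih =>
    rw [cons_append, countInfix_cons, countInfix_cons, length_cons]
    by_cases hcross : p <+: a :: (A ++ B) ∧ ¬ p <+: a :: A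
    · have hlong : A.length + 1 < p.length := by
        by_contra! hle
        refine hcross.2 (prefix_of_prefix_length_le hcross.1 (prefix_append (a :: A) B) ?_)
        simpa using hle
      rw [if_pos hcross.1, if_neg hcross.2]
      omega
    · have : (if p <+: a :: (A ++ B) then 1 else 0) ≤ if p <+: a :: A then 1 else 0 := by
        split_ifs <;> tauto
      omega

theorem countInfix_append_le (p A B : List α) :
    countInfix p (A ++ B) ≤ countInfix p A + countInfix p B + (p.length - 1) :=
  (countInfix_append_le_min p A B).trans (by omega)

theorem countInfix_concat (p X : List α) (a : α) :
    countInfix p (X ++ [a]) = countInfix p X + if p <:+ X ++ [a] then 1 else 0 := by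
  induction X with
  | nil =>
    have : p <+: [a] ↔ p <:+ [a] := by
      constructor <;> intro h <;>
        rcases (infix_singleton_iff p a).1 h.isInfix with rfl | rfl <;> simp
    simp [countInfix_cons, this]
  | cons x X ih =>
    rw [cons_append, countInfix_cons, countInfix_cons, ih]
    have hpre : p <+: x :: (X ++ [a]) ↔ p = x :: (X ++ [a]) ∨ p <+: x :: X := by
      simpa using prefix_concat_iff (l₂ := x :: X) (a := a)
    rw [if_congr hpre rfl rfl, if_congr suffix_cons_iff rfl rfl]
    by_cases hE : p = x :: (X ++ [a])
    · have h₁ : ¬ p <+: x :: X := fun h => by simpa [hE] using h.length_le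
      have h₂ : ¬ p <:+ X ++ [a] := fun h => by simpa [hE] using h.length_le
      rw [if_pos (Or.inl hE), if_pos (Or.inl hE), if_neg h₁, if_neg h₂]
      omega
    · simp only [hE, false_or]
      omega

theorem countInfix_reverse (p l : List α) : countInfix p l.reverse = countInfix p.reverse l := by
  induction l with
  | nil => rfl
  | cons a l ih =>
    rw [reverse_cons, countInfix_concat, ih, countInfix_cons, ← reverse_cons]
    simp only [← reverse_prefix, reverse_reverse]
    omega

theorem countInfix_map {β : Type*} [DecidableEq β] {f : α → β} (hf : Function.Injective f)
    (p l : List α) : countInfix (p.map f) (l.map f) = countInfix p l := by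
  induction l with
  | nil => rfl
  | cons a l ih =>
    rw [map_cons, countInfix_cons, countInfix_cons, ih, ← map_cons]
    simp only [prefix_map_iff_of_injective hf]

end List

def IsQuasimorphism {G : Type*} [Group G] (Φ : G → ℤ) (D : ℤ) : Prop :=
  ∀ g h, |Φ (g * h) - Φ g - Φ h| ≤ D

namespace IsQuasimorphism

variable {G : Type*} [Group G] {Φ : G → ℤ} {D : ℤ}

theorem nonneg (hΦ : IsQuasimorphism Φ D) : 0 ≤ D :=
  (abs_nonneg _).trans (hΦ 1 1)

theorem abs_apply_list_prod_le (hΦ : IsQuasimorphism Φ D) {C : ℤ}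
    {l : List G} (hl : ∀ x ∈ l, |Φ x| ≤ C) : |Φ l.prod| ≤ (C + D) * l.length + D := by
  induction l with
  | nil => simpa using hΦ 1 1
  | cons x l ih =>
    have hx := hl x List.mem_cons_self
    have hprod := ih fun y hy => hl y (List.mem_cons_of_mem x hy)
    have hmul := hΦ x l.prod
    rw [abs_le] at *
    push_cast [List.prod_cons, List.length_cons]
    constructor <;> linarith

theorem abs_apply_prod_sub_apply_prod_le (hΦ : IsQuasimorphism Φ D)
    {x y : G} (hx : Φ x = 0) (hy : Φ y = 0) (A B : List G) :
    |Φ (A ++ x :: B).prod - Φ (A ++ y :: B).prod| ≤ 4 * D := by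
  have h₁ := hΦ A.prod (x * B.prod)
  have h₂ := hΦ x B.prod
  have h₃ := hΦ A.prod (y * B.prod)
  have h₄ := hΦ y B.prod
  rw [abs_le] at *
  simp only [List.prod_append, List.prod_cons]
  constructor <;> linarith

variable {X : Set G}

theorem abs_apply_prod_sub_apply_prod_le_ncard (hΦ : IsQuasimorphism Φ D)
    (hletter : ∀ x, IsLetter X x → Φ x = 0) (A : List G) {w p : List G} (hw : IsWord X w)
    (hp : IsWord X p) (hlen : w.length = p.length) :
    |Φ (A ++ w).prod - Φ (A ++ p).prod| ≤ 4 * D * {i : ℕ | w[i]? ≠ p[i]?}.ncard := by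
  classical
  induction w generalizing A p with
  | nil => simp [List.length_eq_zero_iff.1 hlen.symm]
  | cons x w ih =>
    obtain ⟨y, p, rfl⟩ := List.exists_cons_of_length_eq_add_one hlen.symm
    rw [IsWord, List.forall_mem_cons] at hw hp
    have hhead :
        |Φ (A ++ x :: w).prod - Φ (A ++ y :: w).prod| ≤ 4 * D * if x = y then 0 else 1 := by
      split_ifs with hxy
      · simp [hxy]
      · simpa using hΦ.abs_apply_prod_sub_apply_prod_le (hletter x hw.1) (hletter y hp.1) A w
    have htail := ih (A ++ [y]) hw.2 hp.2 (by simpa using hlen)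
    simp only [List.append_assoc, List.singleton_append] at htail
    rw [List.ncard_setOf_getElem?_ne_cons]
    calc |Φ (A ++ x :: w).prod - Φ (A ++ y :: p).prod|
        ≤ |Φ (A ++ x :: w).prod - Φ (A ++ y :: w).prod| +
            |Φ (A ++ y :: w).prod - Φ (A ++ y :: p).prod| := abs_sub_le _ _ _
      _ ≤ _ := by push_cast; linarith

theorem abs_apply_le_of_isAlmostPalindrome (hΦ : IsQuasimorphism Φ D)
    (hletter : ∀ x, IsLetter X x → Φ x = 0)
    (hpal : ∀ p, IsWord X p → p.reverse = p → Φ p.prod = 0)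
    {m : ℕ} {g : G} (hg : IsAlmostPalindrome X m g) : |Φ g| ≤ 4 * D * m := by
  obtain ⟨w, hw, rfl, p, hp, hrev, hlen, hcard⟩ := hg
  have hD := hΦ.nonneg
  have := hΦ.abs_apply_prod_sub_apply_prod_le_ncard hletter [] hw hp hlen
  rw [List.nil_append, List.nil_append, hpal p hp hrev, sub_zero] at this
  exact this.trans (by gcongr)

theorem abs_apply_le_of_isProductOfAlmostPalindromes (hΦ : IsQuasimorphism Φ D)
    (hletter : ∀ x, IsLetter X x → Φ x = 0)
    (hpal : ∀ p, IsWord X p → p.reverse = p → Φ p.prod = 0)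
    {m k : ℕ} {g : G} (hg : IsProductOfAlmostPalindromes X m k g) :
    |Φ g| ≤ (4 * D * m + D) * k + D := by
  obtain ⟨l, hlen, hl, rfl⟩ := hg
  have hD := hΦ.nonneg
  have hfactor x (hx : x ∈ l) := hΦ.abs_apply_le_of_isAlmostPalindrome hletter hpal (hl x hx)
  exact (hΦ.abs_apply_list_prod_le hfactor).trans (by gcongr)

theorem exists_not_isProductOfAlmostPalindromes (hΦ : IsQuasimorphism Φ D)
    (hletter : ∀ x, IsLetter X x → Φ x = 0)
    (hpal : ∀ p, IsWord X p → p.reverse = p → Φ p.prod = 0)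
    (hunbdd : ∀ N : ℤ, ∃ g, N < |Φ g|) (m k : ℕ) :
    ∃ g, ¬ IsProductOfAlmostPalindromes X m k g := by
  obtain ⟨g, hg⟩ := hunbdd ((4 * D * m + D) * k + D)
  exact ⟨g, fun hprod =>
    (hΦ.abs_apply_le_of_isProductOfAlmostPalindromes hletter hpal hprod).not_gt hg⟩

end IsQuasimorphism

namespace FreeGroup

open List

variable {α : Type*}

theorem IsReduced.reverse {L : List (α × Bool)} (h : IsReduced L) : IsReduced L.reverse :=
  List.isChain_reverse.2 (h.imp fun _ _ hab heq => (hab heq.symm).symm)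

theorem Red.Step.reverse {L₁ L₂ : List (α × Bool)} (h : Red.Step L₁ L₂) :
    Red.Step L₁.reverse L₂.reverse := by
  obtain ⟨L, L', x, b⟩ := h
  simp

variable [DecidableEq α]

theorem reduce_reverse (L : List (α × Bool)) : reduce L.reverse = (reduce L).reverse := by
  have hred : Red L.reverse (reduce L).reverse :=
    Relation.ReflTransGen.lift List.reverse (fun _ _ => Red.Step.reverse) _ _ reduce.red
  rw [reduce.eq_of_red hred, (IsReduced.of_reduce_eq reduce.idem).reverse.reduce_eq]

theorem IsReduced.exists_reduce_append_eq {u v : List (α × Bool)} (hu : IsReduced u)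
    (hv : IsReduced v) :
    ∃ A c B, u = A ++ c ∧ v = invRev c ++ B ∧ reduce (u ++ v) = A ++ B := by
  induction u using List.reverseRecOn generalizing v with
  | nil => exact ⟨[], [], v, rfl, rfl, hv.reduce_eq⟩
  | append_singleton u x ih =>
    rcases v with _ | ⟨y, v⟩
    · exact ⟨u ++ [x], [], [], by simp, rfl, by simpa using hu.reduce_eq⟩
    by_cases hxy : x.1 = y.1 → x.2 = y.2
    · refine ⟨u ++ [x], [], y :: v, by simp, rfl, IsReduced.reduce_eq ?_⟩
      exact hu.append_overlap (isReduced_cons_cons.2 ⟨hxy, hv⟩) (cons_ne_nil x [])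
    · obtain ⟨A, c, B, rfl, rfl, hAB⟩ :=
        ih (v := v) (hu.infix ⟨[], [x], rfl⟩) (hv.infix ⟨[y], [], by simp⟩)
      have hy : y = (x.1, !x.2) := by
        obtain ⟨x₁, x₂⟩ := x; obtain ⟨y₁, y₂⟩ := y
        simp only [Classical.not_imp] at hxy
        cases x₂ <;> cases y₂ <;> simp_all
      subst hy
      refine ⟨A, c ++ [x], B, by simp, by simp [invRev], ?_⟩
      rw [← hAB, ← reduce.Step.eq (Red.Step.not (L₁ := A ++ c) (x := x.1) (b := x.2))]
      simp

theorem exists_toWord_mul_eq (g h : FreeGroup α) :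
    ∃ A c B, g.toWord = A ++ c ∧ h.toWord = invRev c ++ B ∧ (g * h).toWord = A ++ B := by
  rw [toWord_mul]
  exact isReduced_toWord.exists_reduce_append_eq isReduced_toWord

theorem countInfix_invRev (p L : List (α × Bool)) :
    countInfix p (invRev L) = countInfix (invRev p) L := by
  have hinj : Function.Injective fun a : α × Bool => (a.1, !a.2) := fun a b h => by
    simpa [Prod.ext_iff] using h
  rw [invRev, countInfix_reverse, ← countInfix_map hinj]
  simp [invRev, map_reverse, Function.comp_def]

def brooksCount (w L : List (α × Bool)) : ℤ := countInfix w L - countInfix (invRev w) L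

theorem brooksCount_invRev (w L : List (α × Bool)) :
    brooksCount w (invRev L) = -brooksCount w L := by
  simp only [brooksCount, countInfix_invRev, invRev_invRev]
  ring

theorem brooksCount_reverse (w L : List (α × Bool)) :
    brooksCount w L.reverse = brooksCount w.reverse L := by
  simp only [brooksCount, countInfix_reverse]
  congr 3
  simp [invRev, map_reverse]

theorem brooksCount_eq_zero_of_length_lt {w L : List (α × Bool)} (h : L.length < w.length) :
    brooksCount w L = 0 := by
  rw [brooksCount, countInfix_eq_zero_of_length_lt h,
    countInfix_eq_zero_of_length_lt (by rwa [invRev_length]), sub_self]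

theorem abs_brooksCount_append_sub_le (w A B : List (α × Bool)) :
    |brooksCount w (A ++ B) - brooksCount w A - brooksCount w B| ≤ (w.length - 1 : ℕ) := by
  have h₁ := countInfix_add_countInfix_le_append w A B
  have h₂ := countInfix_append_le w A B
  have h₃ := countInfix_add_countInfix_le_append (invRev w) A B
  have h₄ := countInfix_append_le (invRev w) A B
  rw [invRev_length] at h₄
  rw [abs_le, brooksCount, brooksCount, brooksCount]
  omega

theorem abs_brooksCount_toWord_mul_sub_le (w : List (α × Bool)) (g h : FreeGroup α) :
    |brooksCount w (g * h).toWord - brooksCount w g.toWord - brooksCount w h.toWord| ≤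
      3 * (w.length - 1 : ℕ) := by
  obtain ⟨A, c, B, hg, hh, hgh⟩ := exists_toWord_mul_eq g h
  have h₁ := abs_brooksCount_append_sub_le w A B
  have h₂ := abs_brooksCount_append_sub_le w A c
  have h₃ := abs_brooksCount_append_sub_le w (invRev c) B
  have h₄ := brooksCount_invRev w c
  rw [hg, hh, hgh]
  rw [abs_le] at *
  constructor <;> linarith

def skewBrooks (w : List (α × Bool)) (g : FreeGroup α) : ℤ :=
  brooksCount w g.toWord - brooksCount w.reverse g.toWord

theorem isQuasimorphism_skewBrooks (w : List (α × Bool)) :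
    IsQuasimorphism (skewBrooks w) (6 * (w.length - 1 : ℕ)) := by
  intro g h
  have h₁ := abs_brooksCount_toWord_mul_sub_le w g h
  have h₂ := abs_brooksCount_toWord_mul_sub_le w.reverse g h
  rw [length_reverse] at h₂
  rw [abs_le] at *
  unfold skewBrooks
  constructor <;> linarith

theorem skewBrooks_eq_zero_of_length_lt {w : List (α × Bool)} {g : FreeGroup α}
    (h : g.toWord.length < w.length) : skewBrooks w g = 0 := by
  rw [skewBrooks, brooksCount_eq_zero_of_length_lt h,
    brooksCount_eq_zero_of_length_lt (by rwa [length_reverse]), sub_self]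

theorem skewBrooks_mk_of_reverse_eq (w : List (α × Bool)) {L : List (α × Bool)}
    (hL : L.reverse = L) : skewBrooks w (mk L) = 0 := by
  have hrev : (reduce L).reverse = reduce L := by rw [← reduce_reverse, hL]
  rw [skewBrooks, toWord_mk, ← brooksCount_reverse, hrev, sub_self]

theorem list_prod_eq_mk_flatMap_toWord (l : List (FreeGroup α)) :
    l.prod = mk (l.flatMap toWord) := by
  induction l with
  | nil => rfl
  | cons x l ih => rw [prod_cons, flatMap_cons, ← mul_mk, mk_toWord, ih]

theorem length_toWord_of_isLetter {X : Set (FreeGroup α)} (hX : X ⊆ Set.range of)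
    {x : FreeGroup α} (hx : IsLetter X x) : x.toWord.length = 1 := by
  rcases hx with hx | hx
  · obtain ⟨a, rfl⟩ := hX hx
    simp
  · obtain ⟨a, ha⟩ := hX hx
    rw [← inv_inv x, ← ha, toWord_inv, invRev_length, toWord_of, length_singleton]

theorem skewBrooks_eq_zero_of_isLetter {X : Set (FreeGroup α)} (hX : X ⊆ Set.range of)
    {w : List (α × Bool)} (hw : 2 ≤ w.length) {x : FreeGroup α} (hx : IsLetter X x) :
    skewBrooks w x = 0 :=
  skewBrooks_eq_zero_of_length_lt (by rw [length_toWord_of_isLetter hX hx]; omega)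

theorem skewBrooks_prod_eq_zero_of_isWord {X : Set (FreeGroup α)} (hX : X ⊆ Set.range of)
    (w : List (α × Bool)) {p : List (FreeGroup α)} (hp : IsWord X p) (hrev : p.reverse = p) :
    skewBrooks w p.prod = 0 := by
  rw [list_prod_eq_mk_flatMap_toWord]
  refine skewBrooks_mk_of_reverse_eq w ?_
  rw [reverse_flatMap, hrev]
  refine flatMap_congr fun x hx => ?_
  obtain ⟨s, hs⟩ := length_eq_one_iff.1 (length_toWord_of_isLetter hX (hp x hx))
  simp [hs]

def aab : List (Bool × Bool) := [(true, true), (true, true), (false, true)]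

/-- Every period of `(aabab⁻¹)ⁿ` contains one `aab` and none of the other three patterns. -/
def aabaB : List (Bool × Bool) :=
  [(true, true), (true, true), (false, true), (true, true), (false, false)]

theorem toWord_mk_aabaB_pow (n : ℕ) : (mk aabaB ^ n).toWord = (replicate n aabaB).flatten := by
  have h : IsCyclicallyReduced aabaB := by simp [isCyclicallyReduced_iff, IsReduced, aabaB]
  rw [toWord_pow, toWord_mk, h.isReduced.reduce_eq, (h.flatten_replicate n).isReduced.reduce_eq]

theorem brooksCount_aab_sub_reverse_aabaB_append {L : List (Bool × Bool)}
    (hL : L = [] ∨ ∃ L', L = (true, true) :: (true, true) :: L') :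
    brooksCount aab (aabaB ++ L) - brooksCount aab.reverse (aabaB ++ L) =
      brooksCount aab L - brooksCount aab.reverse L + 1 := by
  rcases hL with rfl | ⟨L', rfl⟩
  · decide
  · simp [brooksCount, aab, aabaB, invRev, countInfix_cons]
    ring

theorem skewBrooks_aab_aabaB_pow (n : ℕ) : skewBrooks aab (mk aabaB ^ n) = n := by
  rw [skewBrooks, toWord_mk_aabaB_pow]
  induction n with
  | zero => rfl
  | succ n ih =>
    rw [replicate_succ, flatten_cons, brooksCount_aab_sub_reverse_aabaB_append, ih]
    · push_cast; ring
    · cases n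
      · exact Or.inl rfl
      · exact Or.inr ⟨_, rfl⟩

end FreeGroup

/-- **Theorem (Staiger; answer to Bardakov's question).** Let `F` be the free group on
two generators `a = FreeGroup.of true` and `b = FreeGroup.of false`. Then for every
`m ≥ 0` the `m`-almost palindromic width of `F` with respect to `{a, b}` is infinite:
there is no pair `(c, m)` such that every element of `F` is a product of at most `c`
many `m`-almost palindromes in the letters `{a^{±1}, b^{±1}}`. -/
theorem freeGroup_almost_palindromic_width_infinite
    (X : Set (FreeGroup Bool))
    (hX : X = {FreeGroup.of true, FreeGroup.of false})
    (m : ℕ) :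
    ∀ k : ℕ, ∃ g : FreeGroup Bool, ¬ IsProductOfAlmostPalindromes X m k g := by
  open FreeGroup in
  have hXof : X ⊆ Set.range of := by
    rw [hX]
    rintro _ (rfl | rfl) <;> exact ⟨_, rfl⟩
  have hunbdd (N : ℤ) : ∃ g, N < |skewBrooks aab g| := by
    obtain ⟨n, hn⟩ := exists_nat_gt N
    exact ⟨mk aabaB ^ n, by rwa [skewBrooks_aab_aabaB_pow, Nat.abs_cast]⟩
  exact (isQuasimorphism_skewBrooks aab).exists_not_isProductOfAlmostPalindromes
    (fun _ => skewBrooks_eq_zero_of_isLetter hXof (by decide))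
    (fun _ => skewBrooks_prod_eq_zero_of_isWord hXof aab) hunbdd m
end
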